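/- Let U and Y be real Banach spaces, let S : U × ℝ^K → Y be a continuous linear map, let K̂ ⊆ Y be a closed convex set, and let ζ be a random vector with values in ℝ^K on a probability space (Ω, 𝒜, ℙ). Define φ(u) := ℙ(S(u, ζ) ∈ K̂). Then: (i) for every u ∈ U the set {z ∈ ℝ^K : S(u, z) ∈ K̂} is closed (hence Borel), so φ is well-defined; (ii) φ is weakly sequentially upper semicontinuous, i.e., limsup_m φ(u_m) ≤ φ(ū) whenever u_m ⇀ ū weakly in U; (iii) for every p ∈ [0,1] the feasible set U_pr := {u ∈ U : φ(u) ≥ p} is weakly sequentially closed. -/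

import Mathlib

/-!
For fixed `ω`, the sequence `S (u m, ζ ω)` converges weakly to `S (ū, ζ ω)`, and a closed
convex set is weakly sequentially closed by Hahn–Banach separation; hence every `ω` lying in
infinitely many of the events `{S (u m, ζ) ∈ K̂}` lies in `{S (ū, ζ) ∈ K̂}`. The reverse Fatou
inequality for a finite measure, `limsup ℙ(Aₘ) ≤ ℙ(limsup Aₘ)`, turns this into upper
semicontinuity of `φ`, and closedness of the superlevel sets `{φ ≥ p}` follows.
-/

open MeasureTheory Filter
open scoped ENNReal

/-- Weak sequential convergence in a normed space. -/
def WeakSeqConv {X : Type*} [NormedAddCommGroup X] [NormedSpace ℝ X]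
    (x : ℕ → X) (x₀ : X) : Prop :=
  ∀ f : X →L[ℝ] ℝ, Tendsto (fun m => f (x m)) atTop (nhds (f x₀))

theorem MeasureTheory.limsup_measure_le_measure_limsup {α : Type*} [MeasurableSpace α]
    (μ : Measure α) [IsFiniteMeasure μ] {s : ℕ → Set α} (hs : ∀ n, NullMeasurableSet (s n) μ) :
    limsup (fun n => μ (s n)) atTop ≤ μ (limsup s atTop) := by
  have hanti : Antitone fun n => ⋃ i ≥ n, s i := fun n m hnm =>
    Set.biUnion_subset_biUnion_left fun i (hi : m ≤ i) => hnm.trans hi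
  have hmeas : ∀ n, NullMeasurableSet (⋃ i ≥ n, s i) μ := fun n =>
    .biUnion (Set.to_countable _) fun i _ => hs i
  rw [limsup_eq_iInf_iSup_of_nat, limsup_eq_iInf_iSup_of_nat]
  simp only [Set.iInf_eq_iInter, Set.iSup_eq_iUnion]
  rw [hanti.measure_iInter hmeas ⟨0, measure_ne_top μ _⟩]
  exact iInf_mono fun n => iSup₂_le fun i hi => measure_mono (Set.subset_biUnion_of_mem hi)

section WeakSeqConv

variable {E F : Type*} [NormedAddCommGroup E] [NormedSpace ℝ E]
  [NormedAddCommGroup F] [NormedSpace ℝ F] {x : ℕ → E} {x₀ : E}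

theorem WeakSeqConv.map (hx : WeakSeqConv x x₀) (T : E →L[ℝ] F) :
    WeakSeqConv (fun m => T (x m)) (T x₀) :=
  fun g => hx (g.comp T)

theorem WeakSeqConv.prodMk_const (hx : WeakSeqConv x x₀) (z : F) :
    WeakSeqConv (fun m => (x m, z)) (x₀, z) := by
  intro f
  have hsplit : ∀ v, f.comp (.inl ℝ E F) v + f (0, z) = f (v, z) := fun v => by
    rw [f.comp_apply, ← map_add, ContinuousLinearMap.inl_apply, Prod.mk_add_mk, add_zero,
      zero_add]
  simpa only [hsplit] using
    (hx (f.comp (.inl ℝ E F))).add (tendsto_const_nhds (x := f (0, z)))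

theorem Convex.mem_of_weakSeqConv_of_frequently_mem {s : Set E} (hconv : Convex ℝ s)
    (hclosed : IsClosed s) (hx : WeakSeqConv x x₀) (hmem : ∃ᶠ m in atTop, x m ∈ s) :
    x₀ ∈ s := by
  by_contra hx₀
  obtain ⟨f, c, hfx₀, hfs⟩ := geometric_hahn_banach_point_closed hconv hclosed hx₀
  exact hmem <| ((hx f).eventually (gt_mem_nhds hfx₀)).mono fun m hm hms =>
    (hfs _ hms).not_gt hm

end WeakSeqConv

section ChanceConstraint

variable {U Y Z : Type*} [NormedAddCommGroup U] [NormedSpace ℝ U]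
  [NormedAddCommGroup Y] [NormedSpace ℝ Y] [NormedAddCommGroup Z] [NormedSpace ℝ Z]
  (S : U × Z →L[ℝ] Y) {Khat : Set Y}

theorem isClosed_setOf_apply_mem (hKcl : IsClosed Khat) (u : U) :
    IsClosed {z : Z | S (u, z) ∈ Khat} :=
  hKcl.preimage (S.continuous.comp (Continuous.prodMk_right u))

theorem limsup_setOf_apply_mem_subset (hKcl : IsClosed Khat) (hKconv : Convex ℝ Khat)
    {Ω : Type*} (ζ : Ω → Z) {u : ℕ → U} {ubar : U} (hu : WeakSeqConv u ubar) :
    limsup (fun m => {ω | S (u m, ζ ω) ∈ Khat}) atTop ⊆ {ω | S (ubar, ζ ω) ∈ Khat} :=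
  fun ω hω => hKconv.mem_of_weakSeqConv_of_frequently_mem hKcl
    ((hu.prodMk_const (ζ ω)).map S) (mem_limsup_iff_frequently_mem.1 hω)

theorem limsup_measure_setOf_apply_mem_le [MeasurableSpace Z] [OpensMeasurableSpace Z]
    (hKcl : IsClosed Khat) (hKconv : Convex ℝ Khat) {Ω : Type*} [MeasurableSpace Ω]
    (P : Measure Ω) [IsFiniteMeasure P] {ζ : Ω → Z} (hζ : Measurable ζ)
    {u : ℕ → U} {ubar : U} (hu : WeakSeqConv u ubar) :
    limsup (fun m => P {ω | S (u m, ζ ω) ∈ Khat}) atTop ≤ P {ω | S (ubar, ζ ω) ∈ Khat} := by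
  have hmeas : ∀ m, MeasurableSet {ω | S (u m, ζ ω) ∈ Khat} := fun m =>
    hζ (isClosed_setOf_apply_mem S hKcl (u m)).measurableSet
  calc limsup (fun m => P {ω | S (u m, ζ ω) ∈ Khat}) atTop
      ≤ P (limsup (fun m => {ω | S (u m, ζ ω) ∈ Khat}) atTop) :=
        limsup_measure_le_measure_limsup P fun m => (hmeas m).nullMeasurableSet
    _ ≤ P {ω | S (ubar, ζ ω) ∈ Khat} :=
        measure_mono (limsup_setOf_apply_mem_subset S hKcl hKconv ζ hu)

end ChanceConstraint

theorem chance_constraint_feasible_set_weakly_seq_closed_general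
    {U Y : Type*} [NormedAddCommGroup U] [NormedSpace ℝ U]
    [NormedAddCommGroup Y] [NormedSpace ℝ Y] {K : ℕ}
    (S : (U × (Fin K → ℝ)) →L[ℝ] Y)
    (Khat : Set Y) (hKcl : IsClosed Khat) (hKconv : Convex ℝ Khat)
    {Ω : Type*} [MeasurableSpace Ω] (P : Measure Ω) [IsProbabilityMeasure P]
    (ζ : Ω → (Fin K → ℝ)) (hζ : Measurable ζ) :
    (∀ u : U, IsClosed {z : Fin K → ℝ | S (u, z) ∈ Khat}) ∧
    (∀ (ubar : U) (u : ℕ → U), WeakSeqConv u ubar →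
      limsup (fun m => P {ω | S (u m, ζ ω) ∈ Khat}) atTop ≤ P {ω | S (ubar, ζ ω) ∈ Khat}) ∧
    (∀ p : ℝ≥0∞, p ≤ 1 → ∀ (u : ℕ → U) (ubar : U),
      (∀ m, p ≤ P {ω | S (u m, ζ ω) ∈ Khat}) → WeakSeqConv u ubar →
      p ≤ P {ω | S (ubar, ζ ω) ∈ Khat}) := by
  have husc := fun (ubar : U) (u : ℕ → U) (hu : WeakSeqConv u ubar) =>
    limsup_measure_setOf_apply_mem_le S hKcl hKconv P hζ hu
  refine ⟨isClosed_setOf_apply_mem S hKcl, husc, fun p _ u ubar hp hu => ?_⟩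
  exact (le_limsup_of_frequently_le (Frequently.of_forall hp)).trans (husc ubar u hu)

/-- For a continuous linear map `S : U × ℝᴷ → Y`, a closed convex set
`K̂ ⊆ Y` and a random vector `ζ`, the probability function `φ(u) = ℙ(S (u, ζ) ∈ K̂)` is
well-defined (the sections are closed), weakly sequentially upper semicontinuous, and the
feasible set `{u | φ(u) ≥ p}` is weakly sequentially closed for every `p ∈ [0,1]`. -/
theorem chance_constraint_feasible_set_weakly_seq_closed
    {U Y : Type*} [NormedAddCommGroup U] [NormedSpace ℝ U] [CompleteSpace U]
    [NormedAddCommGroup Y] [NormedSpace ℝ Y] [CompleteSpace Y] {K : ℕ}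
    (S : (U × (Fin K → ℝ)) →L[ℝ] Y)
    (Khat : Set Y) (hKcl : IsClosed Khat) (hKconv : Convex ℝ Khat)
    {Ω : Type*} [MeasurableSpace Ω] (P : Measure Ω) [IsProbabilityMeasure P]
    (ζ : Ω → (Fin K → ℝ)) (hζ : Measurable ζ) :
    (∀ u : U, IsClosed {z : Fin K → ℝ | S (u, z) ∈ Khat}) ∧
    (∀ (ubar : U) (u : ℕ → U), WeakSeqConv u ubar →
      limsup (fun m => P {ω | S (u m, ζ ω) ∈ Khat}) atTop ≤ P {ω | S (ubar, ζ ω) ∈ Khat}) ∧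
    (∀ p : ℝ≥0∞, p ≤ 1 → ∀ (u : ℕ → U) (ubar : U),
      (∀ m, p ≤ P {ω | S (u m, ζ ω) ∈ Khat}) → WeakSeqConv u ubar →
      p ≤ P {ω | S (ubar, ζ ω) ∈ Khat}) :=
  chance_constraint_feasible_set_weakly_seq_closed_general S Khat hKcl hKconv P ζ hζ
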